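/- Let E be a parameter set and (X, τ, E), (Y, τ', E), (Z, τ'', E) soft topological spaces. Let C = C(Z, Y) be the set of soft continuous maps Z → Y, with the pointwise soft topology on E × C. Suppose the evaluation soft mapping ev : C × Z → Y, i.e. the map (e, (f, z)) ↦ (e, f z) : E × (C × Z) → E × Y, is continuous, where E × (C × Z) carries the product soft topology (the initial topology with respect to the two coordinate maps (e,(f,z)) ↦ (e,f) into E × C and (e,(f,z)) ↦ (e,z) into (E × Z, τ'')). Then for every soft continuous map ĝ : X → C (i.e. Prod.map id ĝ : E × X → E × C continuous for the pointwise soft topology), the map E⁻¹(ĝ) : Z × X → Y given by (z, x) ↦ (ĝ x) z is soft continuous: the map (e, (z, x)) ↦ (e, (ĝ x) z) : E × (Z × X) → E × Y is continuous, where E × (Z × X) carries the product soft topology (initial with respect to (e,(z,x)) ↦ (e,z) into (E × Z, τ'') and (e,(z,x)) ↦ (e,x) into (E × X, τ)). -/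
import Mathlib


/-- The set of soft continuous maps from `(Z, τ'', E)` to `(Y, τ', E)`. -/
def SoftCont {E Z Y : Type*} (τ'' : TopologicalSpace (E × Z)) (τ' : TopologicalSpace (E × Y)) :=
  {f : Z → Y // @Continuous _ _ τ'' τ' (Prod.map id f)}

/-- The pointwise soft topology on `E × C(Z,Y)`. -/
def pointwiseSoftTop {E Z Y : Type*} (τ'' : TopologicalSpace (E × Z))
    (τ' : TopologicalSpace (E × Y)) : TopologicalSpace (E × SoftCont τ'' τ') :=
  ⨅ z : Z, TopologicalSpace.induced (fun p : E × SoftCont τ'' τ' => (p.1, p.2.1 z)) τ'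

/-- The product soft topology on `E × (A × B)` of two soft topologies on `E × A` and
`E × B`: initial with respect to `(e,(a,b)) ↦ (e,a)` and `(e,(a,b)) ↦ (e,b)`. -/
def softProdTop₂ {E A B : Type*} (tA : TopologicalSpace (E × A))
    (tB : TopologicalSpace (E × B)) : TopologicalSpace (E × (A × B)) :=
  TopologicalSpace.induced (fun p : E × (A × B) => (p.1, p.2.1)) tA ⊓
    TopologicalSpace.induced (fun p : E × (A × B) => (p.1, p.2.2)) tB

/-- If the evaluation soft mapping `ev : C(Z,Y) × Z → Y` is soft continuous (for the
pointwise soft topology on `C(Z,Y)`), then for every soft continuous `ĝ : X → C(Z,Y)`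
the map `E⁻¹(ĝ) : Z × X → Y`, `(z, x) ↦ (ĝ x) z`, is soft continuous. -/
theorem exponential_inverse_soft_continuous {E X Y Z : Type*}
    (τ : TopologicalSpace (E × X)) (τ' : TopologicalSpace (E × Y))
    (τ'' : TopologicalSpace (E × Z))
    (hev : @Continuous _ _ (softProdTop₂ (pointwiseSoftTop τ'' τ') τ'') τ'
      (fun p : E × (SoftCont τ'' τ' × Z) => (p.1, p.2.1.1 p.2.2)))
    (g : X → SoftCont τ'' τ')
    (hg : @Continuous _ _ τ (pointwiseSoftTop τ'' τ') (Prod.map id g)) :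
    @Continuous _ _ (softProdTop₂ τ'' τ) τ'
      (fun p : E × (Z × X) => (p.1, (g p.2.2).1 p.2.1)) := by
  letI := softProdTop₂ τ'' τ
  letI := softProdTop₂ (pointwiseSoftTop τ'' τ') τ''
  letI := pointwiseSoftTop τ'' τ'
  letI := τ
  letI := τ'
  letI := τ''
  have h1 : @Continuous _ _ (softProdTop₂ τ'' τ) τ''
      (fun p : E × (Z × X) => (p.1, p.2.1)) :=
    continuous_iff_le_induced.mpr inf_le_left
  have h2 : @Continuous _ _ (softProdTop₂ τ'' τ) τ
      (fun p : E × (Z × X) => (p.1, p.2.2)) :=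
    continuous_iff_le_induced.mpr inf_le_right
  have hh : @Continuous _ _ (softProdTop₂ τ'' τ)
      (softProdTop₂ (pointwiseSoftTop τ'' τ') τ'')
      (fun p : E × (Z × X) => (p.1, (g p.2.2, p.2.1))) := by
    rw [continuous_iff_le_induced]
    unfold softProdTop₂
    rw [induced_inf, induced_compose, induced_compose]
    exact le_inf (continuous_iff_le_induced.mp (hg.comp h2))
      (continuous_iff_le_induced.mp h1)
  exact hev.comp hh
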